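/- arXiv:1406.5701 — 6 statements merged into one kernel-verified Lean document; each statement's English description precedes it below -/
import Mathlib

section
/- Let L be a smooth manifold, γ a 1-form on L, and X a vector field with γ(X) = 1. Then the following are equivalent: (ii) there exists a 1-form α with dγ = α ∧ γ; (iii) dγ ∧ γ = 0; (iv) dγ = −ι_X dγ ∧ γ; (v) dγ + (1/2){γ,γ} = 0, where {α,β} = L_X α ∧ β − α ∧ L_X β. -/
/-- Frobenius-type equivalences for a 1-form `γ` with `γ(X) = 1` (i.e. `ι γ = 1`):
(ii) `∃ α, dγ = α ∧ γ`  ⟺  (iii) `dγ ∧ γ = 0`  ⟺  (iv) `dγ = −ι_X dγ ∧ γ`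
⟺ (v) the Maurer–Cartan equation `dγ + ½{γ,γ} = 0` with
`{α,β} = L_X α ∧ β − α ∧ L_X β`. -/
theorem frobenius_equivalences
    (Ω : Type) [Ring Ω] [Algebra ℝ Ω]
    (G : ℕ → Submodule ℝ Ω)
    (d ι : Ω →ₗ[ℝ] Ω)
    (hone : (1 : Ω) ∈ G 0)
    (hd1 : d 1 = 0)
    (hd2 : ∀ x, d (d x) = 0)
    (hdG : ∀ i, ∀ x ∈ G i, d x ∈ G (i + 1))
    (hι2 : ∀ x, ι (ι x) = 0)
    (hιG : ∀ i, ∀ x ∈ G (i + 1), ι x ∈ G i)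
    (hι0 : ∀ x ∈ G 0, ι x = 0)
    (hdL : ∀ i, ∀ x ∈ G i, ∀ y, d (x * y) = d x * y + ((-1 : ℝ) ^ i) • (x * d y))
    (hιL : ∀ i, ∀ x ∈ G i, ∀ y, ι (x * y) = ι x * y + ((-1 : ℝ) ^ i) • (x * ι y))
    (hcomm : ∀ i j, ∀ x ∈ G i, ∀ y ∈ G j, x * y = ((-1 : ℝ) ^ (i * j)) • (y * x))
    (γ : Ω) (hγ : γ ∈ G 1) (hγX : ι γ = 1) :
    ((∃ α ∈ G 1, d γ = α * γ) ↔ d γ * γ = 0) ∧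
    (d γ * γ = 0 ↔ d γ = -(ι (d γ) * γ)) ∧
    (d γ * γ = 0 ↔
      d γ + (2 : ℝ)⁻¹ • ((ι (d γ) + d (ι γ)) * γ - γ * (ι (d γ) + d (ι γ))) = 0) := by
  -- a real vector space has no 2-torsion
  have two_smul_zero : ∀ x : Ω, x + x = 0 → x = 0 := by
    intro x hx
    have h2 : (2 : ℝ) • x = 0 := by rw [two_smul]; exact hx
    have : x = (2⁻¹ : ℝ) • ((2 : ℝ) • x) := by rw [smul_smul]; norm_num
    rw [this, h2, smul_zero]
  -- γ * γ = 0
  have hγγ : γ * γ = 0 := by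
    have h := hcomm 1 1 γ hγ γ hγ
    simp only [Nat.mul_one, pow_one, neg_one_smul] at h
    exact two_smul_zero _ (eq_neg_iff_add_eq_zero.mp h)
  set β := ι (d γ) with hβdef
  have hdγ2 : d γ ∈ G 2 := hdG 1 γ hγ
  have hβ : β ∈ G 1 := hιG 1 _ hdγ2
  -- ι (dγ * γ) = β * γ + d γ
  have key : ι (d γ * γ) = β * γ + d γ := by
    have h := hιL 2 (d γ) hdγ2 γ
    rw [hγX] at h
    simpa using h
  -- γ * β = -(β * γ)
  have hγβ : γ * β = -(β * γ) := by
    have h := hcomm 1 1 γ hγ β hβ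
    simpa using h
  -- (iii) ↔ (iv)
  have iff34 : d γ * γ = 0 ↔ d γ = -(β * γ) := by
    constructor
    · intro h
      have : (0 : Ω) = β * γ + d γ := by rw [← key, h, map_zero]
      have := this.symm
      rw [add_comm] at this
      exact eq_neg_of_add_eq_zero_left this
    · intro h
      rw [h, neg_mul, mul_assoc, hγγ, mul_zero, neg_zero]
  refine ⟨?_, iff34, ?_⟩
  · constructor
    · rintro ⟨α, hα, h⟩
      rw [h, mul_assoc, hγγ, mul_zero]
    · intro h
      exact ⟨-β, neg_mem hβ, by rw [iff34.mp h, neg_mul]⟩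
  · rw [iff34]
    have hdι : d (ι γ) = 0 := by rw [hγX, hd1]
    rw [hdι, add_zero, hγβ, sub_neg_eq_add]
    have hhalf : (2 : ℝ)⁻¹ • (β * γ + β * γ) = β * γ := by
      rw [← two_smul ℝ, smul_smul]; norm_num
    rw [hhalf]
    constructor
    · intro h; rw [h]; abel
    · intro h; exact eq_neg_of_add_eq_zero_left h
end

section
/- Let L be a smooth manifold, γ a 1-form and X a vector field on L with γ(X) = 1 and dγ ∧ γ = 0. Define δ = d + {γ,·}, where {α,β} = L_X α ∧ β − α ∧ L_X β. Then δ² = 0, so (Λ*(L), δ, {·,·}) is a DGLA. -/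
/-- If `γ(X) = 1` and `dγ ∧ γ = 0`, the operator `δ = d + {γ,·}`
(with `{α,β} = L_X α ∧ β − α ∧ L_X β`) satisfies `δ² = 0`. -/
theorem delta_squared_zero
    (Ω : Type) [Ring Ω] [Algebra ℝ Ω]
    (G : ℕ → Submodule ℝ Ω)
    (d ι : Ω →ₗ[ℝ] Ω)
    (hone : (1 : Ω) ∈ G 0)
    (hd1 : d 1 = 0)
    (hd2 : ∀ x, d (d x) = 0)
    (hdG : ∀ i, ∀ x ∈ G i, d x ∈ G (i + 1))
    (hι2 : ∀ x, ι (ι x) = 0)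
    (hιG : ∀ i, ∀ x ∈ G (i + 1), ι x ∈ G i)
    (hι0 : ∀ x ∈ G 0, ι x = 0)
    (hdL : ∀ i, ∀ x ∈ G i, ∀ y, d (x * y) = d x * y + ((-1 : ℝ) ^ i) • (x * d y))
    (hιL : ∀ i, ∀ x ∈ G i, ∀ y, ι (x * y) = ι x * y + ((-1 : ℝ) ^ i) • (x * ι y))
    (hcomm : ∀ i j, ∀ x ∈ G i, ∀ y ∈ G j, x * y = ((-1 : ℝ) ^ (i * j)) • (y * x))
    (γ : Ω) (hγ : γ ∈ G 1) (hγX : ι γ = 1) (hint : d γ * γ = 0)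
    (D : Ω → Ω)
    (hD : ∀ x, D x = d x + ((ι (d γ) + d (ι γ)) * x - γ * (ι (d x) + d (ι x)))) :
    ∀ x, D (D x) = 0 := by
  set β := ι (d γ) with hβdef
  have hdγ2 : d γ ∈ G 2 := hdG 1 γ hγ
  have hβ1 : β ∈ G 1 := hιG 1 _ hdγ2
  have hιβ : ι β = 0 := hι2 (d γ)
  -- squares vanish for degree-1 elements
  have sq : ∀ a : Ω, a ∈ G 1 → a * a = 0 := by
    intro a ha
    have h := hcomm 1 1 a ha a ha
    simp only [mul_one, pow_one, neg_one_smul] at h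
    have h2 : a * a + a * a = 0 := by nth_rewrite 1 [h]; exact neg_add_cancel _
    calc a * a = (2:ℝ)⁻¹ • (a * a + a * a) := by
          rw [← two_smul ℝ, smul_smul]; norm_num
      _ = 0 := by rw [h2, smul_zero]
  have hγγ : γ * γ = 0 := sq γ hγ
  have hββ : β * β = 0 := sq β hβ1
  -- d γ = -(β * γ)
  have hdγ_eq : d γ = -(β * γ) := by
    have h := hιL 2 (d γ) hdγ2 γ
    rw [hint, map_zero, hγX, mul_one] at h
    simp only [neg_one_sq, one_smul] at h
    exact eq_neg_of_add_eq_zero_right h.symm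
  -- product rules, specialized
  have pdβ : ∀ y, d (β * y) = d β * y - β * d y := by
    intro y
    have := hdL 1 β hβ1 y
    simpa [pow_one, neg_one_smul, sub_eq_add_neg] using this
  have pιβ : ∀ y, ι (β * y) = -(β * ι y) := by
    intro y
    have := hιL 1 β hβ1 y
    simpa [hιβ, pow_one, neg_one_smul] using this
  have pdγ : ∀ y, d (γ * y) = d γ * y - γ * d y := by
    intro y
    have := hdL 1 γ hγ y
    simpa [pow_one, neg_one_smul, sub_eq_add_neg] using this
  have pιγ : ∀ y, ι (γ * y) = y - γ * ι y := by
    intro y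
    have := hιL 1 γ hγ y
    simpa [hγX, pow_one, neg_one_smul, sub_eq_add_neg] using this
  have pιdγ : ∀ y, ι (d γ * y) = β * y + d γ * ι y := by
    intro y
    have := hιL 2 (d γ) hdγ2 y
    simpa [neg_one_sq] using this
  have hdβ2 : d β ∈ G 2 := hdG 1 β hβ1
  have pιdβ : ∀ y, ι (d β * y) = ι (d β) * y + d β * ι y := by
    intro y
    have := hιL 2 (d β) hdβ2 y
    simpa [neg_one_sq] using this
  -- key: d β = γ * ι (d β)
  have hdβγ : d β * γ = 0 := by
    have h := hd2 γ
    rw [hdγ_eq, map_neg, pdβ γ, hdγ_eq] at h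
    -- h : -(d β * γ - β * -(β*γ)) = 0
    have h2 : β * -(β * γ) = 0 := by
      rw [mul_neg, ← mul_assoc, hββ, zero_mul, neg_zero]
    rw [h2, sub_zero, neg_eq_zero] at h
    exact h
  have hkey : d β = γ * ι (d β) := by
    have h := pιdβ γ
    rw [hdβγ, map_zero, hγX, mul_one] at h
    -- 0 = ι (d β) * γ + d β
    have hιdβ1 : ι (d β) ∈ G 1 := hιG 1 _ hdβ2
    have hc := hcomm 1 1 (ι (d β)) hιdβ1 γ hγ
    simp only [mul_one, pow_one, neg_one_smul] at hc
    have h3 : d β = -(ι (d β) * γ) := eq_neg_of_add_eq_zero_right h.symm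
    calc d β = -(ι (d β) * γ) := h3
      _ = γ * ι (d β) := by rw [hc, neg_neg]
  -- simplified formula for D
  have hD' : ∀ y, D y = d y + (β * y - γ * (ι (d y) + d (ι y))) := by
    intro y
    rw [hD, hγX, hd1, add_zero]
  intro x
  rw [hD' (D x), hD' x]
  simp only [map_add, map_sub, hd2, pdβ, pιβ, pdγ, pιγ, pιdγ, pιdβ, map_neg, map_zero, hι2,
    mul_add, mul_sub, mul_neg, add_mul, sub_mul, neg_mul]
  rw [hkey]
  simp only [hdγ_eq, pιγ, hι2, map_zero, mul_zero, zero_mul, mul_neg, neg_mul, neg_neg,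
    sub_zero, zero_sub, ← mul_assoc, hγγ, hββ, zero_mul, mul_zero]
  abel
end

section
/- Let (γ, X) be a defining couple for an integrable codimension-1 distribution ξ on L and V a vector field with values in ξ (i.e. γ(V)=0). Define Θ(α) = α + (−1)^{deg α} ι_V α ∧ γ. Then Θ maps Z_{γ,X}*(L) to Z_{γ,X+V}*(L), is bijective with inverse α ↦ α + (−1)^{deg α} ι_{−V} α ∧ γ, and intertwines the differentials: Θ∘δ_{γ,X} = δ_{γ,X+V}∘Θ. -/
/-- Changing the transverse vector field: for a ξ-valued vector field `V`
(interior product `κ = ι_V`, `κ γ = 0`), the map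
`Θ(α) = α + (−1)^{deg α} ι_V α ∧ γ` sends `Z_{γ,X}` to `Z_{γ,X+V}`
(`ι_{X+V} = ι + κ`), is bijective with inverse `β ↦ β + (−1)^{deg β} ι_{−V} β ∧ γ`,
and intertwines `δ_{γ,X}` with `δ_{γ,X+V}`. -/
theorem change_of_vector_field_dgvs_isomorphism
    (Ω : Type) [Ring Ω] [Algebra ℝ Ω]
    (G : ℕ → Submodule ℝ Ω)
    (d ι : Ω →ₗ[ℝ] Ω)
    (hone : (1 : Ω) ∈ G 0)
    (hd1 : d 1 = 0)
    (hd2 : ∀ x, d (d x) = 0)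
    (hdG : ∀ i, ∀ x ∈ G i, d x ∈ G (i + 1))
    (hι2 : ∀ x, ι (ι x) = 0)
    (hιG : ∀ i, ∀ x ∈ G (i + 1), ι x ∈ G i)
    (hι0 : ∀ x ∈ G 0, ι x = 0)
    (hdL : ∀ i, ∀ x ∈ G i, ∀ y, d (x * y) = d x * y + ((-1 : ℝ) ^ i) • (x * d y))
    (hιL : ∀ i, ∀ x ∈ G i, ∀ y, ι (x * y) = ι x * y + ((-1 : ℝ) ^ i) • (x * ι y))
    (hcomm : ∀ i j, ∀ x ∈ G i, ∀ y ∈ G j, x * y = ((-1 : ℝ) ^ (i * j)) • (y * x))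
    (γ : Ω) (hγ : γ ∈ G 1) (hγX : ι γ = 1) (hint : d γ * γ = 0)
    (κ : Ω →ₗ[ℝ] Ω)
    (hκ2 : ∀ x, κ (κ x) = 0)
    (hκG : ∀ i, ∀ x ∈ G (i + 1), κ x ∈ G i)
    (hκ0 : ∀ x ∈ G 0, κ x = 0)
    (hκL : ∀ i, ∀ x ∈ G i, ∀ y, κ (x * y) = κ x * y + ((-1 : ℝ) ^ i) • (x * κ y))
    (hκι : ∀ x, ι (κ x) + κ (ι x) = 0)
    (hκγ : κ γ = 0) :
    (∀ p : ℕ, ∀ α ∈ G p, ι α = 0 →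
      ∀ θα δα θδα : Ω,
        θα = α + ((-1 : ℝ) ^ p) • (κ α * γ) →
        δα = d α + (ι (d γ) * α - γ * ι (d α)) →
        θδα = δα + ((-1 : ℝ) ^ (p + 1)) • (κ δα * γ) →
        (ι θα + κ θα = 0) ∧
        (θα - ((-1 : ℝ) ^ p) • (κ θα * γ) = α) ∧
        (θδα = d θα + (((ι (d γ) + κ (d γ)) * θα)
            - γ * (ι (d θα) + κ (d θα))))) ∧
    (∀ p : ℕ, ∀ β ∈ G p, ι β + κ β = 0 →
      ∀ θ'β : Ω, θ'β = β - ((-1 : ℝ) ^ p) • (κ β * γ) →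
        θ'β + ((-1 : ℝ) ^ p) • (κ θ'β * γ) = β) := by
  have hκιv : ∀ x, κ (ι x) = -ι (κ x) := fun x => (neg_eq_of_add_eq_zero_right (hκι x)).symm
  have hγγ : γ * γ = 0 := by
    have h := hcomm 1 1 γ hγ γ hγ
    simp only [mul_one, pow_one, neg_one_smul] at h
    have h2 : (2:ℝ) • (γ * γ) = 0 := by rw [two_smul]; nth_rewrite 1 [h]; exact neg_add_cancel _
    exact (smul_eq_zero.mp h2).resolve_left (by norm_num)
  have hγγ' : ∀ y : Ω, γ * (γ * y) = 0 := fun y => by rw [← mul_assoc, hγγ, zero_mul]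
  have pushg : ∀ i, ∀ x ∈ G i, γ * x = ((-1:ℝ)^i) • (x * γ) := by
    intro i x hx; simpa using hcomm 1 i γ hγ x hx
  have pushg' : ∀ i, ∀ x ∈ G i, ∀ y, γ * (x * y) = ((-1:ℝ)^i) • (x * (γ * y)) := by
    intro i x hx y
    rw [← mul_assoc, pushg i x hx, smul_mul_assoc, mul_assoc]
  have hdγ2 : d γ ∈ G 2 := hdG 1 γ hγ
  have hidg1 : ι (d γ) ∈ G 1 := hιG 1 _ hdγ2
  have hkdg1 : κ (d γ) ∈ G 1 := hκG 1 _ hdγ2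
  have hikdg0 : ι (κ (d γ)) ∈ G 0 := hιG 0 _ hkdg1
  have hdγval : d γ = -(ι (d γ) * γ) := by
    have h := hιL 2 (d γ) hdγ2 γ
    rw [hint, map_zero, hγX, mul_one] at h
    rw [show ((-1:ℝ))^2 = 1 by norm_num, one_smul] at h
    exact (neg_eq_of_add_eq_zero_right h.symm).symm
  have hκdγval : κ (d γ) = ι (κ (d γ)) * γ := by
    have h := hκL 1 (ι (d γ)) hidg1 γ
    rw [hκγ, mul_zero, smul_zero, add_zero, hκιv] at h
    calc κ (d γ) = κ (-(ι (d γ) * γ)) := by rw [← hdγval]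
      _ = -(-ι (κ (d γ)) * γ) := by rw [map_neg, h]
      _ = ι (κ (d γ)) * γ := by rw [neg_mul, neg_neg]
  have Lκγy : ∀ y, κ (γ * y) = -(γ * κ y) := fun y => by
    have h := hκL 1 γ hγ y
    rwa [hκγ, zero_mul, zero_add, pow_one, neg_one_smul] at h
  have Lιidgy : ∀ y, ι (ι (d γ) * y) = -(ι (d γ) * ι y) := fun y => by
    have h := hιL 1 (ι (d γ)) hidg1 y
    rwa [hι2, zero_mul, zero_add, pow_one, neg_one_smul] at h
  have Lκidgy : ∀ y, κ (ι (d γ) * y) = -(ι (κ (d γ)) * y) + -(ι (d γ) * κ y) := fun y => by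
    have h := hκL 1 (ι (d γ)) hidg1 y
    rwa [hκιv, pow_one, neg_one_smul, neg_mul] at h
  constructor
  · intro p α hα hια θα δα θδα hθ hδ hθδ
    subst hθδ; subst hδ; subst hθ
    rcases p with _ | q
    · -- p = 0
      have hκα : κ α = 0 := hκ0 α hα
      have hdα1 : d α ∈ G 1 := hdG 0 α hα
      have hκdα0 : κ (d α) ∈ G 0 := hκG 0 _ hdα1
      have hιdα0 : ι (d α) ∈ G 0 := hιG 0 _ hdα1
      have hικdα : ι (κ (d α)) = 0 := hι0 _ hκdα0
      refine ⟨?_, ?_, ?_⟩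
      · simp [hκα, hια]
      · simp [hκα]
      · have p0α := pushg 0 α hα
        have p0α' := pushg' 0 α hα
        have p0ιdα := pushg 0 _ hιdα0
        have p0ιdα' := pushg' 0 _ hιdα0
        have p0κdα := pushg 0 _ hκdα0
        have p0κdα' := pushg' 0 _ hκdα0
        have L0 : κ (ι (d α) * γ) = 0 := by
          rw [hκL 0 _ hιdα0 γ, hκγ, mul_zero, smul_zero, add_zero, hκιv, hικdα, neg_zero, zero_mul]
        rw [hκdγval]
        simp only [hκα, zero_mul, mul_zero, smul_zero, add_zero, zero_add, L0, map_neg,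
          map_add, map_sub, map_smul, map_zero, hια, hγX, hκιv, hικdα,
          Lκγy, Lιidgy, Lκidgy, p0α, p0α', p0ιdα, p0ιdα', p0κdα, p0κdα',
          hγγ, hγγ', pow_zero, pow_one, one_smul, neg_one_smul, Nat.zero_add,
          mul_add, add_mul, mul_sub, sub_mul, mul_assoc, mul_one, one_mul,
          neg_mul, mul_neg, neg_neg, smul_add, smul_sub, smul_neg, smul_smul,
          sub_zero, smul_mul_assoc, mul_smul_comm]
        abel
    · -- p = q + 1
      have hκαq : κ α ∈ G q := hκG q α hα
      have hικα : ι (κ α) = 0 := by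
        have h := hκι α; rwa [hια, map_zero, add_zero] at h
      have hdκα : d (κ α) ∈ G (q+1) := hdG q _ hκαq
      have hdα : d α ∈ G (q+1+1) := hdG (q+1) α hα
      have hκdα : κ (d α) ∈ G (q+1) := hκG (q+1) _ hdα
      have hιdα : ι (d α) ∈ G (q+1) := hιG (q+1) _ hdα
      have hικdα : ι (κ (d α)) ∈ G q := hιG q _ hκdα
      have hιdκα : ι (d (κ α)) ∈ G q := hιG q _ hdκα
      have hκdκα : κ (d (κ α)) ∈ G q := hκG q _ hdκα
      have LιKαy : ∀ y, ι (κ α * y) = ((-1:ℝ)^q) • (κ α * ι y) := fun y => by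
        have h := hιL q (κ α) hκαq y
        rwa [hικα, zero_mul, zero_add] at h
      have LκKαy : ∀ y, κ (κ α * y) = ((-1:ℝ)^q) • (κ α * κ y) := fun y => by
        have h := hκL q (κ α) hκαq y
        rwa [hκ2, zero_mul, zero_add] at h
      have LdKαy : ∀ y, d (κ α * y) = d (κ α) * y + ((-1:ℝ)^q) • (κ α * d y) :=
        hdL q (κ α) hκαq
      have hkadg : κ α * d γ = -(κ α * (ι (d γ) * γ)) := by
        conv_lhs => rw [hdγval, mul_neg]
      have LιdKαy : ∀ y, ι (d (κ α) * y)
          = ι (d (κ α)) * y + ((-1:ℝ)^(q+1)) • (d (κ α) * ι y) := hιL (q+1) _ hdκα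
      have LκdKαy : ∀ y, κ (d (κ α) * y)
          = κ (d (κ α)) * y + ((-1:ℝ)^(q+1)) • (d (κ α) * κ y) := hκL (q+1) _ hdκα
      -- push-γ instances
      have pα := pushg _ _ hα
      have pα' := pushg' _ _ hα
      have pκα := pushg _ _ hκαq
      have pκα' := pushg' _ _ hκαq
      have pdκα := pushg _ _ hdκα
      have pdκα' := pushg' _ _ hdκα
      have pιdα := pushg _ _ hιdα
      have pιdα' := pushg' _ _ hιdα
      have pκdα := pushg _ _ hκdα
      have pκdα' := pushg' _ _ hκdα
      have pιdκα := pushg _ _ hιdκα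
      have pιdκα' := pushg' _ _ hιdκα
      have pκdκα := pushg _ _ hκdκα
      have pκdκα' := pushg' _ _ hκdκα
      have pικdα := pushg _ _ hικdα
      have pικdα' := pushg' _ _ hικdα
      have pidg := pushg _ _ hidg1
      have pidg' := pushg' _ _ hidg1
      have pikdg := pushg _ _ hikdg0
      have pikdg' := pushg' _ _ hikdg0
      have sw : ι (d γ) * κ α = ((-1:ℝ)^q) • (κ α * ι (d γ)) := by
        simpa using hcomm 1 q (ι (d γ)) hidg1 (κ α) hκαq
      have sw' : ∀ y, ι (d γ) * (κ α * y) = ((-1:ℝ)^q) • (κ α * (ι (d γ) * y)) := by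
        intro y; rw [← mul_assoc, sw, smul_mul_assoc, mul_assoc]
      have Lκιdαγ : κ (ι (d α) * γ) = -(ι (κ (d α)) * γ) := by
        rw [hκL (q+1) _ hιdα γ, hκγ, mul_zero, smul_zero, add_zero, hκιv, neg_mul]
      have hqq : ((-1:ℝ))^q * ((-1:ℝ))^q = 1 := by
        rw [← pow_add]; exact Even.neg_one_pow ⟨q, rfl⟩
      have hsm : ((-1:ℝ))^(q+1) * ((-1:ℝ))^q = -1 := by
        rw [pow_succ]; linear_combination -hqq
      refine ⟨?_, ?_, ?_⟩
      · simp only [map_add, map_smul, hια, zero_add, LιKαy, LκKαy, hγX, hκγ, mul_one,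
          mul_zero, smul_zero, add_zero, smul_smul, hsm, neg_one_smul]
        abel
      · simp only [map_add, map_smul, LκKαy, hκγ, mul_zero, smul_zero, add_zero]
        exact add_sub_cancel_right _ _
      · rw [hκdγval]
        simp only [map_add, map_sub, map_smul, hια, hγX, hκγ, hκιv,
          LιKαy, LκKαy, LdKαy, hkadg, LιdKαy, LκdKαy, Lκγy, Lιidgy, Lκidgy, Lκιdαγ, map_neg,
          pα, pα', pκα, pκα', pdκα, pdκα', pιdα, pιdα', pκdα, pκdα',
          pιdκα, pιdκα', pκdκα, pκdκα', pικdα, pικdα', pidg, pidg', pikdg, pikdg',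
          sw, sw', hγγ, hγγ',
          mul_add, add_mul, mul_sub, sub_mul, mul_assoc, mul_one, one_mul,
          mul_zero, zero_mul, add_zero, zero_add, sub_zero, neg_mul, mul_neg, neg_neg,
          smul_add, smul_sub, smul_neg, smul_smul, smul_zero, zero_smul, one_smul,
          smul_mul_assoc, mul_smul_comm, pow_zero]
        rcases neg_one_pow_eq_or ℝ q with h0 | h0 <;>
          simp only [h0, pow_succ, pow_zero, neg_mul, one_mul, mul_one, mul_neg, neg_neg,
            one_smul, neg_one_smul, neg_smul, smul_smul, smul_neg] <;>
          abel
  · intro p β hβ _ θ'β hθ'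
    subst hθ'
    rcases p with _ | q
    · have hκβ : κ β = 0 := hκ0 β hβ
      simp [hκβ]
    · have hκβq : κ β ∈ G q := hκG q β hβ
      have h2 : κ (κ β * γ) = 0 := by
        rw [hκL q (κ β) hκβq γ, hκ2, zero_mul, hκγ, mul_zero, smul_zero, add_zero]
      simp only [map_sub, map_smul, h2, smul_zero, sub_zero]
      abel
end

section
/- Let (γ, X) be a defining couple for an integrable codimension-1 distribution on L, δ = d + {γ,·}, and α ∈ Z¹(L) = {ω ∈ Λ¹(L) : ι_X ω = 0}. Then the distribution ker(γ + α) is integrable if and only if δα + (1/2){α,α} = 0 (the Maurer–Cartan equation in (Z*(L), δ, {·,·})). -/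
/-- For `α ∈ Z¹(L)` (a 1-form with `ι_X α = 0`), the distribution
`ker(γ + α)` is integrable (Frobenius: `d(γ+α) ∧ (γ+α) = 0`) iff `α`
satisfies the Maurer–Cartan equation `δα + ½{α,α} = 0` in `(Z*(L), δ, {·,·})`. -/
theorem ker_integrable_iff_maurer_cartan
    (Ω : Type) [Ring Ω] [Algebra ℝ Ω]
    (G : ℕ → Submodule ℝ Ω)
    (d ι : Ω →ₗ[ℝ] Ω)
    (hone : (1 : Ω) ∈ G 0)
    (hd1 : d 1 = 0)
    (hd2 : ∀ x, d (d x) = 0)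
    (hdG : ∀ i, ∀ x ∈ G i, d x ∈ G (i + 1))
    (hι2 : ∀ x, ι (ι x) = 0)
    (hιG : ∀ i, ∀ x ∈ G (i + 1), ι x ∈ G i)
    (hι0 : ∀ x ∈ G 0, ι x = 0)
    (hdL : ∀ i, ∀ x ∈ G i, ∀ y, d (x * y) = d x * y + ((-1 : ℝ) ^ i) • (x * d y))
    (hιL : ∀ i, ∀ x ∈ G i, ∀ y, ι (x * y) = ι x * y + ((-1 : ℝ) ^ i) • (x * ι y))
    (hcomm : ∀ i j, ∀ x ∈ G i, ∀ y ∈ G j, x * y = ((-1 : ℝ) ^ (i * j)) • (y * x))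
    (γ : Ω) (hγ : γ ∈ G 1) (hγX : ι γ = 1) (hint : d γ * γ = 0)
    (α : Ω) (hα : α ∈ G 1) (hαX : ι α = 0)
    (B : Ω → Ω → Ω)
    (hB : ∀ x y, B x y = ι (d x) * y - x * ι (d y))
    (D : Ω → Ω)
    (hD : ∀ x, D x = d x + (ι (d γ) * x - γ * ι (d x))) :
    d (γ + α) * (γ + α) = 0 ↔ D α + (2 : ℝ)⁻¹ • B α α = 0 := by
  have hβ : γ + α ∈ G 1 := Submodule.add_mem _ hγ hα
  have hdγ : d γ ∈ G 2 := hdG 1 γ hγ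
  have hdα : d α ∈ G 2 := hdG 1 α hα
  have hdβ : d (γ + α) ∈ G 2 := hdG 1 _ hβ
  have hιdγ : ι (d γ) ∈ G 1 := hιG 1 (d γ) hdγ
  have hιdα : ι (d α) ∈ G 1 := hιG 1 (d α) hdα
  have hιβ : ι (γ + α) = 1 := by rw [map_add, hγX, hαX, add_zero]
  -- (γ+α)*(γ+α) = 0
  have hββ : (γ + α) * (γ + α) = 0 := by
    have h := hcomm 1 1 (γ + α) hβ (γ + α) hβ
    have h2 : (2 : ℝ) • ((γ + α) * (γ + α)) = 0 := by
      rw [two_smul]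
      nth_rewrite 1 [h]
      simp
    rcases smul_eq_zero.mp h2 with h' | h'
    · norm_num at h'
    · exact h'
  -- ι(dγ)*γ = -dγ
  have eγ : ι (d γ) * γ = -(d γ) := by
    have h := hιL 2 (d γ) hdγ γ
    rw [hint, map_zero, hγX] at h
    have h' : ι (d γ) * γ + d γ = 0 := by
      have := h.symm
      simpa using this
    exact eq_neg_of_add_eq_zero_left h'
  -- ι(dα)*γ = -(γ*ι(dα))
  have eαγ : ι (d α) * γ = -(γ * ι (d α)) := by
    have h := hcomm 1 1 (ι (d α)) hιdα γ hγ
    simpa using h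
  -- α*ι(dα) = -(ι(dα)*α)
  have eα : α * ι (d α) = -(ι (d α) * α) := by
    have h := hcomm 1 1 α hα (ι (d α)) hιdα
    simpa using h
  -- key: ι(d(γ+α)*(γ+α)) = Maurer–Cartan expression
  have key : ι (d (γ + α) * (γ + α)) = D α + (2 : ℝ)⁻¹ • B α α := by
    have h := hιL 2 (d (γ + α)) hdβ (γ + α)
    rw [hιβ, mul_one] at h
    rw [h, hD α, hB α α]
    rw [map_add d γ α, map_add ι (d γ) (d α)]
    simp only [add_mul, mul_add]
    rw [eγ, eαγ, eα]
    simp only [neg_neg, pow_two]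
    module
  -- recovery: d(γ+α)*(γ+α) = (γ+α) * ι(d(γ+α)*(γ+α))
  have hβω : (γ + α) * (d (γ + α) * (γ + α)) = 0 := by
    have hc := hcomm 1 2 (γ + α) hβ (d (γ + α)) hdβ
    calc (γ + α) * (d (γ + α) * (γ + α))
        = ((γ + α) * d (γ + α)) * (γ + α) := by rw [mul_assoc]
      _ = (d (γ + α) * (γ + α)) * (γ + α) := by rw [hc]; norm_num
      _ = d (γ + α) * ((γ + α) * (γ + α)) := by rw [mul_assoc]
      _ = 0 := by rw [hββ, mul_zero]
  have hrec : d (γ + α) * (γ + α) = (γ + α) * ι (d (γ + α) * (γ + α)) := by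
    have h := hιL 1 (γ + α) hβ (d (γ + α) * (γ + α))
    rw [hβω, map_zero, hιβ, one_mul] at h
    have h' : d (γ + α) * (γ + α) - (γ + α) * ι (d (γ + α) * (γ + α)) = 0 := by
      have := h.symm
      rw [pow_one, neg_one_smul, ← sub_eq_add_neg] at this
      exact this
    exact sub_eq_zero.mp h'
  constructor
  · intro h0
    rw [← key, h0, map_zero]
  · intro hM
    rw [hrec, key, hM, mul_zero]
end

section
/- Let Y be a vector field on L with flow Φ_t^Y and (γ, X) a defining couple for an integrable codimension-1 distribution. Define χ(Φ)(0) = ((Φ^{-1})*γ(X))^{-1}(Φ^{-1})*γ − γ. Then the derivative at t = 0 of t ↦ χ(Φ_t^Y)(0) equals −δ(ι_Y γ), where δ = d + {γ,·}. -/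
/-- The derivative at `t = 0` of `t ↦ χ(Φ_t^Y)(0)`, which by the Lie-derivative
formula equals `(L_Y γ)(X)·γ − L_Y γ` (here `κ = ι_Y`, `L_Y γ = κ dγ + d(κγ)`),
is `−δ(ι_Y γ)`, where `δ f = d f + ι_X dγ · f − γ · ι_X d f` on functions. -/
theorem derivative_of_group_action_is_minus_delta
    (Ω : Type) [Ring Ω] [Algebra ℝ Ω]
    (G : ℕ → Submodule ℝ Ω)
    (d ι : Ω →ₗ[ℝ] Ω)
    (hone : (1 : Ω) ∈ G 0)
    (hd1 : d 1 = 0)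
    (hd2 : ∀ x, d (d x) = 0)
    (hdG : ∀ i, ∀ x ∈ G i, d x ∈ G (i + 1))
    (hι2 : ∀ x, ι (ι x) = 0)
    (hιG : ∀ i, ∀ x ∈ G (i + 1), ι x ∈ G i)
    (hι0 : ∀ x ∈ G 0, ι x = 0)
    (hdL : ∀ i, ∀ x ∈ G i, ∀ y, d (x * y) = d x * y + ((-1 : ℝ) ^ i) • (x * d y))
    (hιL : ∀ i, ∀ x ∈ G i, ∀ y, ι (x * y) = ι x * y + ((-1 : ℝ) ^ i) • (x * ι y))
    (hcomm : ∀ i j, ∀ x ∈ G i, ∀ y ∈ G j, x * y = ((-1 : ℝ) ^ (i * j)) • (y * x))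
    (γ : Ω) (hγ : γ ∈ G 1) (hγX : ι γ = 1) (hint : d γ * γ = 0)
    (κ : Ω →ₗ[ℝ] Ω)
    (hκ2 : ∀ x, κ (κ x) = 0)
    (hκG : ∀ i, ∀ x ∈ G (i + 1), κ x ∈ G i)
    (hκ0 : ∀ x ∈ G 0, κ x = 0)
    (hκL : ∀ i, ∀ x ∈ G i, ∀ y, κ (x * y) = κ x * y + ((-1 : ℝ) ^ i) • (x * κ y))
    (Dχ : Ω)
    (hDχ : Dχ = ι (κ (d γ) + d (κ γ)) * γ - (κ (d γ) + d (κ γ))) :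
    Dχ = -(d (κ γ) + (ι (d γ) * κ γ - γ * ι (d (κ γ)))) := by
  have hdγ2 : d γ ∈ G 2 := hdG 1 γ hγ
  have hιdγ1 : ι (d γ) ∈ G 1 := hιG 1 (d γ) hdγ2
  have hf0 : κ γ ∈ G 0 := hκG 0 γ hγ
  have hb0 : κ (ι (d γ)) ∈ G 0 := hκG 0 (ι (d γ)) hιdγ1
  have hdf1 : d (κ γ) ∈ G 1 := hdG 0 (κ γ) hf0
  have hιdf0 : ι (d (κ γ)) ∈ G 0 := hιG 0 (d (κ γ)) hdf1
  -- dγ = −ι(dγ)·γ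
  have h0 : ι (d γ * γ) = 0 := by rw [hint, map_zero]
  rw [hιL 2 (d γ) hdγ2 γ, hγX] at h0
  have hdg : d γ = -(ι (d γ) * γ) := by
    have h0' : ι (d γ) * γ + d γ = 0 := by
      simpa using h0
    rw [add_comm] at h0'
    exact eq_neg_of_add_eq_zero_left h0'
  -- κ(dγ) = −κ(ι dγ)·γ + ι(dγ)·κγ
  have hkdg : κ (d γ) = -(κ (ι (d γ)) * γ) + ι (d γ) * κ γ := by
    calc κ (d γ) = κ (-(ι (d γ) * γ)) := congrArg κ hdg
      _ = -(κ (ι (d γ)) * γ) + ι (d γ) * κ γ := by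
          rw [map_neg, hκL 1 (ι (d γ)) hιdγ1 γ]
          simp [neg_one_smul]
          abel
  -- ι(κ dγ) = −κ(ι dγ)
  have hikdg : ι (κ (d γ)) = -(κ (ι (d γ))) := by
    rw [hkdg, map_add, map_neg, hιL 0 (κ (ι (d γ))) hb0 γ,
      hιL 1 (ι (d γ)) hιdγ1 (κ γ), hι0 _ hb0, hι0 _ hf0, hι2, hγX]
    simp
  -- ι(d f)·γ = γ·ι(d f)
  have hc : ι (d (κ γ)) * γ = γ * ι (d (κ γ)) := by
    have := hcomm 0 1 (ι (d (κ γ))) hιdf0 γ hγ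
    simpa using this
  rw [hDχ, map_add, hikdg, hkdg, add_mul, hc]
  noncomm_ring
end

section
/- Let (γ, X) be a defining couple for an integrable codimension-1 distribution ξ and let d_b denote the leafwise (tangential) differential, realized on Z*(L) = {α : ι_X α = 0} by d_b α = ι_X(γ ∧ dα) = dα − γ ∧ ι_X dα. Then the 1-form ι_X dγ is d_b-closed. -/
/-- The 1-form `ι_X dγ` is closed for the leafwise differential
`d_b β = ι_X(γ ∧ dβ)`. -/
theorem iota_X_d_gamma_db_closed
    (Ω : Type) [Ring Ω] [Algebra ℝ Ω]
    (G : ℕ → Submodule ℝ Ω)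
    (d ι : Ω →ₗ[ℝ] Ω)
    (hone : (1 : Ω) ∈ G 0)
    (hd1 : d 1 = 0)
    (hd2 : ∀ x, d (d x) = 0)
    (hdG : ∀ i, ∀ x ∈ G i, d x ∈ G (i + 1))
    (hι2 : ∀ x, ι (ι x) = 0)
    (hιG : ∀ i, ∀ x ∈ G (i + 1), ι x ∈ G i)
    (hι0 : ∀ x ∈ G 0, ι x = 0)
    (hdL : ∀ i, ∀ x ∈ G i, ∀ y, d (x * y) = d x * y + ((-1 : ℝ) ^ i) • (x * d y))
    (hιL : ∀ i, ∀ x ∈ G i, ∀ y, ι (x * y) = ι x * y + ((-1 : ℝ) ^ i) • (x * ι y))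
    (hcomm : ∀ i j, ∀ x ∈ G i, ∀ y ∈ G j, x * y = ((-1 : ℝ) ^ (i * j)) • (y * x))
    (γ : Ω) (hγ : γ ∈ G 1) (hγX : ι γ = 1) (hint : d γ * γ = 0) :
    ι (γ * d (ι (d γ))) = 0 := by
  set η := ι (d γ) with hη
  have hdγ2 : d γ ∈ G 2 := hdG 1 γ hγ
  have hη1 : η ∈ G 1 := hιG 1 _ hdγ2
  -- η * γ = - d γ
  have hexp : η * γ + d γ = 0 := by
    have h1 : ι (d γ * γ) = ι (d γ) * γ + ((-1 : ℝ) ^ 2) • (d γ * ι γ) :=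
      hιL 2 (d γ) hdγ2 γ
    rw [hint, map_zero, hγX, mul_one] at h1
    simpa using h1.symm
  have hηγ : η * γ = -(d γ) := eq_neg_of_add_eq_zero_left hexp
  -- η * η = 0
  have hηη : η * η = 0 := by
    have h2 : η * η = ((-1 : ℝ) ^ (1 * 1)) • (η * η) := hcomm 1 1 η hη1 η hη1
    simp only [mul_one, pow_one, neg_smul, one_smul] at h2
    have h3 : (2 : ℝ) • (η * η) = 0 := by
      rw [two_smul]
      nth_rewrite 1 [h2]
      exact neg_add_cancel _
    calc η * η = ((2 : ℝ)⁻¹ * 2) • (η * η) := by norm_num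
      _ = (2 : ℝ)⁻¹ • ((2 : ℝ) • (η * η)) := by rw [mul_smul]
      _ = 0 := by rw [h3, smul_zero]
  -- d η * γ = 0
  have hdηγ : d η * γ = 0 := by
    have h4 : d (η * γ) = d η * γ + ((-1 : ℝ) ^ 1) • (η * d γ) := hdL 1 η hη1 γ
    have h5 : d (η * γ) = 0 := by rw [hηγ, map_neg, hd2, neg_zero]
    have h6 : η * d γ = 0 := by
      rw [← neg_neg (d γ), ← hηγ, mul_neg, ← mul_assoc, hηη, zero_mul, neg_zero]
    rw [h5, h6, smul_zero, add_zero] at h4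
    exact h4.symm
  -- γ * d η = 0
  have h7 : γ * d η = ((-1 : ℝ) ^ (1 * 2)) • (d η * γ) :=
    hcomm 1 2 γ hγ (d η) (hdG 1 η hη1)
  rw [h7, hdηγ, smul_zero, map_zero]
end
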